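/- The quotient ring 𝔽₂[x₁,…,x_ℓ]/(f_{n−ℓ+1},…,f_n) is a finite-dimensional 𝔽₂-vector space; moreover every element of the ideal (f_{n−ℓ+1},…,f_n) has no component in degree ≤ n−ℓ, so the quotient agrees with the polynomial ring in degrees ≤ n−ℓ. -/

import Mathlib

/-!
Write `hsymmOn s m` for the complete homogeneous polynomial of degree `m` in the variables
indexed by `s`. Splitting off a variable `i ∉ s` gives
`h_{m+1}(s ∪ {i}) = h_{m+1}(s) + x_i h_m(s ∪ {i})`, so removing the variables one at a time
from `h_{n-ℓ+1}, …, h_n` shows that `h_{n-k+1}(s), …, h_n(s)` lie in the ideal whenever `#s = k`;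
for `s = {i}` this says `x_i ^ n` lies in it. The quotient is therefore generated by nilpotent,
hence integral, elements, so it is finite. The generators `h_m` are homogeneous of degree
`m > n - ℓ`, and the polynomials without monomials of degree `≤ n - ℓ` form an ideal.
-/

open MvPolynomial Finset

namespace MvPolynomial

variable {σ R : Type*}

section CommSemiring

variable [CommSemiring R]

section HsymmOn

variable [DecidableEq σ]

noncomputable def hsymmOn (s : Finset σ) (m : ℕ) : MvPolynomial σ R :=
  ∑ d ∈ s.finsuppAntidiag m, monomial d 1

theorem coeff_hsymmOn (s : Finset σ) (m : ℕ) (d : σ →₀ ℕ) :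
    coeff d (hsymmOn s m : MvPolynomial σ R) = if d.degree = m ∧ d.support ⊆ s then 1 else 0 := by
  simp only [hsymmOn, coeff_sum, coeff_monomial, sum_ite_eq', mem_finsuppAntidiag']
  rfl

theorem hsymmOn_univ [Fintype σ] (m : ℕ) : hsymmOn univ m = hsymm σ R m := by
  refine sum_bij' (fun d hd => ⟨d.toMultiset, ?_⟩) (fun t _ => Multiset.toFinsupp t.1)
    (fun _ _ => mem_univ _) (fun t _ => ?_) (fun d _ => ?_) (fun t _ => ?_) (fun d _ => ?_)
  · rw [Finsupp.card_toMultiset]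
    exact (mem_finsuppAntidiag'.1 hd).1
  · rw [mem_finsuppAntidiag']
    exact ⟨(Multiset.toFinsupp_sum_eq _).trans t.2, subset_univ _⟩
  · simp
  · ext1; simp
  · rw [monomial_eq, C_1, one_mul]
    simp [prod_multiset_map_count, Finsupp.prod]

theorem hsymmOn_singleton (i : σ) (m : ℕ) : hsymmOn {i} m = (X i ^ m : MvPolynomial σ R) := by
  ext d
  rw [coeff_hsymmOn, X_pow_eq_monomial, coeff_monomial]
  refine if_congr ?_ rfl rfl
  rw [Finsupp.support_subset_singleton']
  constructor
  · rintro ⟨rfl, b, rfl⟩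
    rw [Finsupp.degree_single]
  · rintro rfl
    exact ⟨Finsupp.degree_single i m, m, rfl⟩

theorem hsymmOn_insert {i : σ} {s : Finset σ} (hi : i ∉ s) (m : ℕ) :
    hsymmOn (insert i s) (m + 1) =
      hsymmOn s (m + 1) + X i * (hsymmOn (insert i s) m : MvPolynomial σ R) := by
  ext d
  rw [coeff_add, coeff_X_mul', coeff_hsymmOn, coeff_hsymmOn, coeff_hsymmOn]
  by_cases hd : i ∈ d.support
  · have hle : Finsupp.single i 1 ≤ d := by
      rw [Finsupp.single_le_iff]; exact Nat.one_le_iff_ne_zero.2 (Finsupp.mem_support_iff.1 hd)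
    have hdeg : (d - Finsupp.single i 1).degree + 1 = d.degree := by
      simpa using congrArg Finsupp.degree (tsub_add_cancel_of_le hle)
    have hsupp : (d - Finsupp.single i 1).support ⊆ insert i s ↔ d.support ⊆ insert i s := by
      refine ⟨fun h j hj => ?_, (Finsupp.support_tsub).trans⟩
      by_cases hji : j = i
      · exact hji ▸ mem_insert_self i s
      · apply h
        simpa [Finsupp.single_apply, Ne.symm hji] using hj
    rw [if_pos hd, if_neg (show ¬(_ ∧ d.support ⊆ s) from fun h => hi (h.2 hd)), zero_add]
    refine if_congr ?_ rfl rfl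
    rw [hsupp, ← hdeg, add_left_inj]
  · rw [if_neg hd, add_zero]
    refine if_congr ?_ rfl rfl
    rw [subset_insert_iff_of_notMem hd]

theorem coeff_hsymm [Fintype σ] (m : ℕ) (d : σ →₀ ℕ) :
    coeff d (hsymm σ R m) = if d.degree = m then 1 else 0 := by
  rw [← hsymmOn_univ, coeff_hsymmOn]
  exact if_congr (and_iff_left (subset_univ _)) rfl rfl

end HsymmOn

variable (σ R) in
def highDegreeIdeal (k : ℕ) : Ideal (MvPolynomial σ R) where
  carrier := {p | ∀ d : σ →₀ ℕ, d.degree ≤ k → coeff d p = 0}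
  add_mem' hp hq d hd := by rw [coeff_add, hp d hd, hq d hd, add_zero]
  zero_mem' d _ := coeff_zero d
  smul_mem' c p hp d hd := by
    classical
    rw [smul_eq_mul, coeff_mul]
    refine sum_eq_zero fun x hx => ?_
    have hx : x.2 ≤ d := (mem_antidiagonal.1 hx) ▸ le_add_self
    rw [hp x.2 ((Finsupp.degree_mono hx).trans hd), mul_zero]

theorem hsymm_mem_highDegreeIdeal [Fintype σ] [DecidableEq σ] {k m : ℕ} (h : k < m) :
    hsymm σ R m ∈ highDegreeIdeal σ R k := by
  intro d hd
  rw [coeff_hsymm, if_neg (by omega)]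

end CommSemiring

section CommRing

variable [CommRing R]

theorem finite_quotient_of_X_pow_mem [Finite σ] {I : Ideal (MvPolynomial σ R)} {n : ℕ}
    (h : ∀ i, X i ^ n ∈ I) : Module.Finite R (MvPolynomial σ R ⧸ I) := by
  set f := Ideal.Quotient.mkₐ R I
  have hgen : Algebra.adjoin R (Set.range fun i => f (X i)) = ⊤ := by
    rw [Set.range_comp' f X, Algebra.adjoin_image, adjoin_range_X, Algebra.map_top,
      (AlgHom.range_eq_top _).2 (Ideal.Quotient.mkₐ_surjective R I)]
  have hint : ∀ x ∈ Set.range fun i => f (X i), IsIntegral R x := by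
    rintro _ ⟨i, rfl⟩
    refine ⟨Polynomial.X ^ n, Polynomial.monic_X_pow n, ?_⟩
    rw [Polynomial.eval₂_X_pow, ← map_pow, Ideal.Quotient.mkₐ_eq_mk,
      Ideal.Quotient.eq_zero_iff_mem.2 (h i)]
  exact ⟨by simpa [hgen] using fg_adjoin_of_finite (Set.finite_range _) hint⟩

variable [Fintype σ] [DecidableEq σ]

theorem hsymmOn_mem_of_hsymm_mem {I : Ideal (MvPolynomial σ R)} {n : ℕ}
    (hσ : Fintype.card σ ≤ n) (hI : ∀ m ∈ Set.Icc (n - Fintype.card σ + 1) n, hsymm σ R m ∈ I)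
    (s : Finset σ) : ∀ m ∈ Set.Icc (n - #s + 1) n, hsymmOn s m ∈ I := by
  suffices ∀ t : Finset σ, ∀ m ∈ Set.Icc (n - #tᶜ + 1) n, hsymmOn tᶜ m ∈ I by
    simpa using this sᶜ
  intro t
  induction t using Finset.induction_on with
  | empty => simpa [hsymmOn_univ] using hI
  | insert i t hi ih =>
    have hi' : i ∉ (insert i t)ᶜ := by simp
    have hins : insert i (insert i t)ᶜ = tᶜ := by
      ext j
      by_cases hj : j = i <;> simp [hj, hi]
    have hcard : #tᶜ = #(insert i t)ᶜ + 1 := by rw [← hins, card_insert_of_notMem hi']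
    have hct : #tᶜ ≤ n := (card_le_univ _).trans hσ
    rintro m ⟨hlo, hhi⟩
    obtain ⟨m, rfl⟩ : ∃ m', m = m' + 1 := ⟨m - 1, by omega⟩
    have hrec := hsymmOn_insert (R := R) hi' m
    rw [hins] at hrec
    rw [eq_sub_of_add_eq hrec.symm]
    exact sub_mem (ih _ ⟨by omega, hhi⟩) (I.mul_mem_left _ (ih _ ⟨by omega, by omega⟩))

theorem X_pow_mem_of_hsymm_mem {I : Ideal (MvPolynomial σ R)} {n : ℕ}
    (hσ : Fintype.card σ ≤ n) (hI : ∀ m ∈ Set.Icc (n - Fintype.card σ + 1) n, hsymm σ R m ∈ I)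
    (i : σ) : X i ^ n ∈ I := by
  have : 0 < n := (Fintype.card_pos_iff.2 ⟨i⟩).trans_le hσ
  rw [← hsymmOn_singleton]
  exact hsymmOn_mem_of_hsymm_mem hσ hI {i} n ⟨by simp; omega, le_rfl⟩

end CommRing

end MvPolynomial

theorem quotient_finite_dimensional_and_low_degrees_general (n ℓ : ℕ) (hn : ℓ ≤ n) :
    FiniteDimensional (ZMod 2)
      (MvPolynomial (Fin ℓ) (ZMod 2) ⧸
        Ideal.span ((fun j => hsymm (Fin ℓ) (ZMod 2) j) '' (Set.Icc (n - ℓ + 1) n))) ∧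
    (∀ p ∈ Ideal.span ((fun j => hsymm (Fin ℓ) (ZMod 2) j) '' (Set.Icc (n - ℓ + 1) n)),
      ∀ d : Fin ℓ →₀ ℕ, (d.sum fun _ k => k) ≤ n - ℓ → MvPolynomial.coeff d p = 0) := by
  set I := Ideal.span ((fun j => hsymm (Fin ℓ) (ZMod 2) j) '' (Set.Icc (n - ℓ + 1) n))
  have hI : ∀ m ∈ Set.Icc (n - Fintype.card (Fin ℓ) + 1) n, hsymm (Fin ℓ) (ZMod 2) m ∈ I :=
    fun m hm => Ideal.subset_span ⟨m, by simpa using hm, rfl⟩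
  have hlow : I ≤ highDegreeIdeal (Fin ℓ) (ZMod 2) (n - ℓ) := Ideal.span_le.2 <| by
    rintro _ ⟨m, hm, rfl⟩
    exact hsymm_mem_highDegreeIdeal hm.1
  exact ⟨finite_quotient_of_X_pow_mem (X_pow_mem_of_hsymm_mem (by simpa using hn) hI),
    fun p hp d hd => hlow hp d hd⟩

/-- The quotient `𝔽₂[x₁,…,x_ℓ]/(f_{n−ℓ+1},…,f_n)` is a finite-dimensional
`𝔽₂`-vector space; moreover every element of the ideal `(f_{n−ℓ+1},…,f_n)` has no
component in degree `≤ n − ℓ`, so the quotient agrees with the polynomial ring in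
degrees `≤ n − ℓ`. -/
theorem quotient_finite_dimensional_and_low_degrees (n ℓ : ℕ) (hℓ : 1 ≤ ℓ) (hn : ℓ ≤ n) :
    FiniteDimensional (ZMod 2)
      (MvPolynomial (Fin ℓ) (ZMod 2) ⧸
        Ideal.span ((fun j => hsymm (Fin ℓ) (ZMod 2) j) '' (Set.Icc (n - ℓ + 1) n))) ∧
    (∀ p ∈ Ideal.span ((fun j => hsymm (Fin ℓ) (ZMod 2) j) '' (Set.Icc (n - ℓ + 1) n)),
      ∀ d : Fin ℓ →₀ ℕ, (d.sum fun _ k => k) ≤ n - ℓ → MvPolynomial.coeff d p = 0) :=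
  quotient_finite_dimensional_and_low_degrees_general n ℓ hn
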